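/- Let G be a finitely generated group of polynomial growth of degree exactly k (there exist α, β > 0 with α m^k ≤ #G_m ≤ β m^k for all m ≥ 1, where G_m is the ball of radius m for some finite generating set). Then no finitely generated subgroup H ≤ G containing an element g₀ with g₀^n ∉ H for all n ≥ 1 can also have growth of degree ≥ k, i.e., if H ≤ G satisfies #H_m ≥ α' m^k for all m ≥ 1 (with respect to a generating set contained in that of G, and some α' > 0), then every element of G has a positive power in H. -/
import Mathlib
open Pointwise

def wordBall {G : Type*} [Group G] [DecidableEq G] (S : Finset G) (m : ℕ) : Finset G :=
  (insert (1 : G) (S ∪ S⁻¹)) ^ m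

private lemma listProd_mem_pow {G : Type*} [Group G] [DecidableEq G] (B : Finset G) (l : List G)
    (h : ∀ x ∈ l, x ∈ B) : l.prod ∈ B ^ l.length := by
  induction l with
  | nil => simp
  | cons a t ih =>
    simp only [List.prod_cons, List.length_cons, pow_succ']
    exact Finset.mul_mem_mul (h a (by simp)) (ih fun x hx => h x (List.mem_cons_of_mem _ hx))

private lemma wordBall_subset_closure {G : Type*} [Group G] [DecidableEq G] (T : Finset G)
    (m : ℕ) (x : G) (hx : x ∈ wordBall T m) : x ∈ Subgroup.closure (T : Set G) := by
  induction m generalizing x with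
  | zero => simp only [wordBall, pow_zero, Finset.mem_one] at hx; subst hx; exact one_mem _
  | succ n ih =>
    rw [wordBall, pow_succ] at hx
    obtain ⟨a, ha, b, hb, rfl⟩ := Finset.mem_mul.1 hx
    refine mul_mem (ih a ha) ?_
    simp only [Finset.mem_insert, Finset.mem_union, Finset.mem_inv] at hb
    rcases hb with rfl | hb | hb
    · exact one_mem _
    · exact Subgroup.subset_closure hb
    · obtain ⟨y, hy, rfl⟩ := hb; exact inv_mem (Subgroup.subset_closure hy)

/-- If `G` has polynomial growth of degree exactly `k`
(`α m^k ≤ #G_m ≤ β m^k` for all `m ≥ 1`) and the subgroup `H = ⟨T⟩` with `T ⊆ S`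
satisfies `#H_m ≥ α' m^k` for all `m ≥ 1`, then every element of `G` has a positive
power lying in `H`. -/
theorem stmt10 {G : Type*} [Group G] [DecidableEq G] (S T : Finset G) (hTS : T ⊆ S)
    (hS : Subgroup.closure (S : Set G) = ⊤)
    (H : Subgroup G) (hH : H = Subgroup.closure (T : Set G))
    (α β α' : ℝ) (hα : 0 < α) (hβ : 0 < β) (hα' : 0 < α') (k : ℕ)
    (hGlower : ∀ m : ℕ, 1 ≤ m → α * (m : ℝ) ^ k ≤ (wordBall S m).card)
    (hGupper : ∀ m : ℕ, 1 ≤ m → ((wordBall S m).card : ℝ) ≤ β * (m : ℝ) ^ k)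
    (hHlower : ∀ m : ℕ, 1 ≤ m → α' * (m : ℝ) ^ k ≤ (wordBall T m).card) :
    ∀ g : G, ∃ n : ℕ, 0 < n ∧ g ^ n ∈ H := by
  intro g
  by_contra hcon
  push_neg at hcon
  have hg : g ∈ Subgroup.closure (S : Set G) := hS ▸ Subgroup.mem_top g
  have hg' : g ∈ Submonoid.closure ((S : Set G) ∪ (S : Set G)⁻¹) := by
    rw [← Subgroup.closure_toSubmonoid] at *; exact hg
  obtain ⟨l, hl, hlprod⟩ := Submonoid.exists_list_of_mem_closure hg'
  set B : Finset G := insert (1 : G) (S ∪ S⁻¹) with hB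
  have hlB : ∀ x ∈ l, x ∈ B := by
    intro x hx
    rcases hl x hx with h | h
    · exact Finset.mem_insert_of_mem (Finset.mem_union_left _ h)
    · refine Finset.mem_insert_of_mem (Finset.mem_union_right _ ?_)
      rw [Finset.mem_inv]
      exact ⟨x⁻¹, by simpa using h, by simp⟩
  set L : ℕ := l.length + 1 with hL
  have h1B : (1 : G) ∈ B := Finset.mem_insert_self _ _
  have hgL : g ∈ B ^ L := by
    rw [hL, pow_succ]
    simpa using Finset.mul_mem_mul (hlprod ▸ listProd_mem_pow B l hlB) h1B
  have hgpow : ∀ i : ℕ, g ^ i ∈ B ^ (i * L) := by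
    intro i
    induction i with
    | zero => simp
    | succ n ih =>
      have h' : (n + 1) * L = n * L + L := by ring
      rw [h', pow_add]
      simpa [pow_succ] using Finset.mul_mem_mul ih hgL
  clear_value L
  -- no two distinct cosets g^i H coincide
  have hcase : ∀ (i j : ℕ) (x y : G), i < j → g ^ i * x = g ^ j * y → x ∈ H → y ∈ H → False := by
    intro i j x y hij heq hxH hyH
    have e1 : g ^ i * (x * y⁻¹) = g ^ j := by rw [← mul_assoc, heq]; group
    have e2 : g ^ i * g ^ (j - i) = g ^ j := by rw [← pow_add]; congr 1; omega
    have e3 : x * y⁻¹ = g ^ (j - i) := mul_left_cancel (e1.trans e2.symm)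
    exact hcon (j - i) (by omega) (e3 ▸ mul_mem hxH (inv_mem hyH))
  have key : ∀ m : ℕ, 1 ≤ m →
      ((m + 1) * (wordBall T m).card : ℝ) ≤ (wordBall S (m * (L + 1))).card := by
    intro m hm
    have hinj : Set.InjOn (fun p : ℕ × G => g ^ p.1 * p.2)
        ((Finset.range (m + 1) ×ˢ wordBall T m) : Finset (ℕ × G)) := by
      rintro ⟨i, x⟩ hix ⟨j, y⟩ hjy heq
      simp only [Finset.coe_product, Set.mem_prod, Finset.mem_coe, Finset.mem_range] at hix hjy
      simp only at heq
      have hxH : x ∈ H := hH ▸ wordBall_subset_closure T m x hix.2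
      have hyH : y ∈ H := hH ▸ wordBall_subset_closure T m y hjy.2
      have hij : i = j := by
        by_contra hne
        rcases Nat.lt_or_ge i j with h | h
        · exact hcase i j x y h heq hxH hyH
        · exact hcase j i y x (by omega) heq.symm hyH hxH
      subst hij
      have : x = y := mul_left_cancel heq
      simp [this]
    have hsub : ∀ p ∈ (Finset.range (m + 1) ×ˢ wordBall T m),
        g ^ p.1 * p.2 ∈ wordBall S (m * (L + 1)) := by
      rintro ⟨i, x⟩ hp
      simp only [Finset.mem_product, Finset.mem_range] at hp
      have h1 : g ^ i ∈ B ^ (i * L) := hgpow i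
      have h2 : x ∈ B ^ m := by
        have hsub' : wordBall T m ⊆ wordBall S m := by
          apply Finset.pow_subset_pow_left
          apply Finset.insert_subset_insert
          exact Finset.union_subset_union hTS (Finset.inv_subset_inv hTS)
        exact hsub' hp.2
      have h3 : g ^ i * x ∈ B ^ (i * L + m) := by
        rw [pow_add]; exact Finset.mul_mem_mul h1 h2
      have hle : i * L + m ≤ m * (L + 1) := by nlinarith [hp.1, hm]
      exact Finset.pow_subset_pow_right h1B hle h3
    calc ((m + 1) * (wordBall T m).card : ℝ)
        = ((Finset.range (m + 1) ×ˢ wordBall T m).card : ℝ) := by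
          rw [Finset.card_product, Finset.card_range]; push_cast; ring
      _ ≤ (wordBall S (m * (L + 1))).card := by
          exact_mod_cast Finset.card_le_card_of_injOn _ hsub hinj
  obtain ⟨m, hm⟩ := exists_nat_gt (β * ((L : ℝ) + 1) ^ k / α')
  have hm1 : 1 ≤ m + 1 := by omega
  have hK := key (m + 1) hm1
  have hHl := hHlower (m + 1) hm1
  have hGu := hGupper ((m + 1) * (L + 1)) (Nat.mul_pos (Nat.succ_pos m) (Nat.succ_pos _))
  have hmk : (0 : ℝ) < ((m + 1 : ℕ) : ℝ) ^ k := by positivity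
  have hm2 : (0 : ℝ) ≤ (m : ℝ) + 2 := by positivity
  have h1 : α' * ((m : ℝ) + 2) * ((m + 1 : ℕ) : ℝ) ^ k
      ≤ β * ((L : ℝ) + 1) ^ k * ((m + 1 : ℕ) : ℝ) ^ k := by
    have step1 : ((m : ℝ) + 2) * (α' * ((m + 1 : ℕ) : ℝ) ^ k)
        ≤ ((m : ℝ) + 2) * ((wordBall T (m + 1)).card : ℝ) :=
      mul_le_mul_of_nonneg_left hHl hm2
    have step2 : (((m + 1 : ℕ) : ℝ) + 1) * ((wordBall T (m + 1)).card : ℝ)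
        ≤ ((wordBall S ((m + 1) * (L + 1))).card : ℝ) := hK
    have step3 : ((wordBall S ((m + 1) * (L + 1))).card : ℝ)
        ≤ β * (((m + 1) * (L + 1) : ℕ) : ℝ) ^ k := hGu
    push_cast at step1 step2 step3 ⊢
    calc α' * ((m : ℝ) + 2) * ((m : ℝ) + 1) ^ k
        = ((m : ℝ) + 2) * (α' * ((m : ℝ) + 1) ^ k) := by ring
      _ ≤ ((m : ℝ) + 2) * ((wordBall T (m + 1)).card : ℝ) := step1
      _ ≤ ((wordBall S ((m + 1) * (L + 1))).card : ℝ) := by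
          have : ((m : ℝ) + 1 + 1) = (m : ℝ) + 2 := by ring
          rw [this] at step2; exact step2
      _ ≤ β * (((m : ℝ) + 1) * ((L : ℝ) + 1)) ^ k := step3
      _ = β * ((L : ℝ) + 1) ^ k * ((m : ℝ) + 1) ^ k := by rw [mul_pow]; ring
  have h2 : α' * ((m : ℝ) + 2) ≤ β * ((L : ℝ) + 1) ^ k :=
    le_of_mul_le_mul_right h1 hmk
  have h3 : β * ((L : ℝ) + 1) ^ k < α' * (m : ℝ) := by
    rw [div_lt_iff₀ hα'] at hm; linarith [hm]
  nlinarith
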